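/- With the matrices A_0,...,A_5 as above (from a balanced weighing matrix with v > k), the products satisfy A_3 A_4 = A_4 A_3 = k A_1 + (k(k−1)/(2(v−1))) A_2 and A_1 A_3 = A_4. -/

import Mathlib

/-!
Both `A₃` and `A₄` are off-diagonal, with blocks of the form `1 ⊗ X + P ⊗ Y`. Since `P² = 1`,
such blocks multiply like elements of the group algebra of `ℤ/2`, so `A₃ A₄` is block diagonal with
blocks `1 ⊗ (W₁W₂ᵀ + W₂W₁ᵀ) + P ⊗ (W₁W₁ᵀ + W₂W₂ᵀ)` and its transposed analogue. Polarizing the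
Gram identities of `W₁ − W₂` and `W₁ + W₂` evaluates both brackets, and `J₂ = 1 + P` regroups the
result as `k A₁ + (λ/2) A₂`. Swapping `W₁` and `W₂` exchanges `A₃` and `A₄`, which gives `A₄ A₃`.
-/

open Matrix Kronecker

namespace BGWScheme

def P : Matrix (Fin 2) (Fin 2) ℚ := !![0, 1; 1, 0]

def J2 : Matrix (Fin 2) (Fin 2) ℚ := Matrix.of fun _ _ => 1

def Jv (v : ℕ) : Matrix (Fin v) (Fin v) ℚ := Matrix.of fun _ _ => 1

/-- Index set for the `4v × 4v` matrices of the scheme. -/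
abbrev Idx (v : ℕ) := (Fin 2 × Fin v) ⊕ (Fin 2 × Fin v)

def A0 (v : ℕ) : Matrix (Idx v) (Idx v) ℚ := 1

def A1 (v : ℕ) : Matrix (Idx v) (Idx v) ℚ :=
  Matrix.fromBlocks (P ⊗ₖ (1 : Matrix (Fin v) (Fin v) ℚ)) 0 0
    (P ⊗ₖ (1 : Matrix (Fin v) (Fin v) ℚ))

def A2 (v : ℕ) : Matrix (Idx v) (Idx v) ℚ :=
  Matrix.fromBlocks (J2 ⊗ₖ (Jv v - 1)) 0 0 (J2 ⊗ₖ (Jv v - 1))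

def A3 (v : ℕ) (W1 W2 : Matrix (Fin v) (Fin v) ℚ) : Matrix (Idx v) (Idx v) ℚ :=
  Matrix.fromBlocks 0 ((1 : Matrix (Fin 2) (Fin 2) ℚ) ⊗ₖ W1 + P ⊗ₖ W2)
    ((1 : Matrix (Fin 2) (Fin 2) ℚ) ⊗ₖ W1ᵀ + P ⊗ₖ W2ᵀ) 0

def A4 (v : ℕ) (W1 W2 : Matrix (Fin v) (Fin v) ℚ) : Matrix (Idx v) (Idx v) ℚ :=
  Matrix.fromBlocks 0 ((1 : Matrix (Fin 2) (Fin 2) ℚ) ⊗ₖ W2 + P ⊗ₖ W1)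
    ((1 : Matrix (Fin 2) (Fin 2) ℚ) ⊗ₖ W2ᵀ + P ⊗ₖ W1ᵀ) 0

def A5 (v : ℕ) (W1 W2 : Matrix (Fin v) (Fin v) ℚ) : Matrix (Idx v) (Idx v) ℚ :=
  Matrix.fromBlocks 0 (J2 ⊗ₖ (Jv v - W1 - W2)) (J2 ⊗ₖ (Jv v - W1ᵀ - W2ᵀ)) 0

lemma P_mul_P : P * P = 1 := by
  ext i j
  fin_cases i <;> fin_cases j <;> simp [P, mul_apply, Fin.sum_univ_two, one_apply]

lemma J2_eq_one_add_P : J2 = 1 + P := by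
  ext i j
  fin_cases i <;> fin_cases j <;> simp [J2, P, one_apply]

lemma one_kronecker_add_P_kronecker_mul {l m n : Type*} [Fintype m] [DecidableEq m]
    [DecidableEq n] (X Y : Matrix l m ℚ) (Z T : Matrix m n ℚ) :
    ((1 : Matrix (Fin 2) (Fin 2) ℚ) ⊗ₖ X + P ⊗ₖ Y) * ((1 : Matrix (Fin 2) (Fin 2) ℚ) ⊗ₖ Z + P ⊗ₖ T)
      = (1 : Matrix (Fin 2) (Fin 2) ℚ) ⊗ₖ (X * Z + Y * T) + P ⊗ₖ (X * T + Y * Z) := by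
  simp only [Matrix.add_mul, Matrix.mul_add, ← mul_kronecker_mul, P_mul_P, Matrix.one_mul,
    Matrix.mul_one, kronecker_add]
  abel

lemma gram_add_and_cross_of_gram_sub_add {n : Type*} [Fintype n] [DecidableEq n]
    (X Y J : Matrix n n ℚ) (k l : ℚ)
    (hsub : (X - Y) * (X - Y)ᵀ = k • (1 : Matrix n n ℚ))
    (hadd : (X + Y) * (X + Y)ᵀ = (k - l) • (1 : Matrix n n ℚ) + l • J) :
    X * Xᵀ + Y * Yᵀ = k • (1 : Matrix n n ℚ) + (l / 2) • (J - 1) ∧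
      X * Yᵀ + Y * Xᵀ = (l / 2) • (J - 1) := by
  simp only [transpose_sub, transpose_add, sub_mul, add_mul, mul_sub, mul_add] at hsub hadd
  constructor
  · linear_combination (norm := module) (2 : ℚ)⁻¹ • hsub + (2 : ℚ)⁻¹ • hadd
  · linear_combination (norm := module) (2 : ℚ)⁻¹ • hadd - (2 : ℚ)⁻¹ • hsub

lemma A4_eq_A3_swap (v : ℕ) (W1 W2 : Matrix (Fin v) (Fin v) ℚ) : A4 v W1 W2 = A3 v W2 W1 := rfl

lemma A1_mul_A3 (v : ℕ) (W1 W2 : Matrix (Fin v) (Fin v) ℚ) : A1 v * A3 v W1 W2 = A4 v W1 W2 := by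
  simp only [A1, A3, A4, fromBlocks_multiply, mul_zero, zero_mul, add_zero, zero_add, mul_add,
    ← mul_kronecker_mul, P_mul_P, one_mul, mul_one, add_comm (P ⊗ₖ _)]

lemma A3_mul_A4 (v : ℕ) (k c : ℚ) (W1 W2 : Matrix (Fin v) (Fin v) ℚ)
    (hS : W1 * W1ᵀ + W2 * W2ᵀ = k • (1 : Matrix (Fin v) (Fin v) ℚ) + c • (Jv v - 1))
    (hM : W1 * W2ᵀ + W2 * W1ᵀ = c • (Jv v - 1))
    (hS' : W1ᵀ * W1 + W2ᵀ * W2 = k • (1 : Matrix (Fin v) (Fin v) ℚ) + c • (Jv v - 1))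
    (hM' : W1ᵀ * W2 + W2ᵀ * W1 = c • (Jv v - 1)) :
    A3 v W1 W2 * A4 v W1 W2 = k • A1 v + c • A2 v := by
  have hblock : (1 : Matrix (Fin 2) (Fin 2) ℚ) ⊗ₖ (c • (Jv v - 1))
      + P ⊗ₖ (k • (1 : Matrix (Fin v) (Fin v) ℚ) + c • (Jv v - 1))
      = k • (P ⊗ₖ (1 : Matrix (Fin v) (Fin v) ℚ)) + c • (J2 ⊗ₖ (Jv v - 1)) := by
    rw [J2_eq_one_add_P, kronecker_add, add_kronecker, kronecker_smul, kronecker_smul,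
      kronecker_smul]
    module
  simp only [A1, A2, A3, A4, fromBlocks_multiply, fromBlocks_smul, fromBlocks_add, mul_zero,
    zero_mul, add_zero, zero_add, smul_zero, one_kronecker_add_P_kronecker_mul,
    hS, hM, hS', hM', hblock]

theorem scheme_product_relations_general (v : ℕ) (k : ℚ)
    (W1 W2 : Matrix (Fin v) (Fin v) ℚ)
    (hW : (W1 - W2) * (W1 - W2)ᵀ = k • (1 : Matrix (Fin v) (Fin v) ℚ))
    (hW' : (W1 - W2)ᵀ * (W1 - W2) = k • (1 : Matrix (Fin v) (Fin v) ℚ))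
    (hN : (W1 + W2) * (W1 + W2)ᵀ
      = (k - k * (k - 1) / ((v : ℚ) - 1)) • (1 : Matrix (Fin v) (Fin v) ℚ)
        + (k * (k - 1) / ((v : ℚ) - 1)) • Jv v)
    (hN' : (W1 + W2)ᵀ * (W1 + W2)
      = (k - k * (k - 1) / ((v : ℚ) - 1)) • (1 : Matrix (Fin v) (Fin v) ℚ)
        + (k * (k - 1) / ((v : ℚ) - 1)) • Jv v) :
    A3 v W1 W2 * A4 v W1 W2
      = k • A1 v + (k * (k - 1) / (2 * ((v : ℚ) - 1))) • A2 v ∧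
    A4 v W1 W2 * A3 v W1 W2
      = k • A1 v + (k * (k - 1) / (2 * ((v : ℚ) - 1))) • A2 v ∧
    A1 v * A3 v W1 W2 = A4 v W1 W2 := by
  have hc : k * (k - 1) / (2 * ((v : ℚ) - 1)) = k * (k - 1) / ((v : ℚ) - 1) / 2 := by
    rw [div_div, mul_comm 2]
  obtain ⟨hS, hM⟩ := gram_add_and_cross_of_gram_sub_add W1 W2 (Jv v) k _ hW hN
  obtain ⟨hS', hM'⟩ := gram_add_and_cross_of_gram_sub_add W1ᵀ W2ᵀ (Jv v) k _
    (by simpa using hW') (by simpa using hN')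
  simp only [transpose_transpose] at hS' hM'
  rw [hc]
  refine ⟨A3_mul_A4 v k _ W1 W2 hS hM hS' hM', ?_, A1_mul_A3 v W1 W2⟩
  rw [A4_eq_A3_swap, ← A4_eq_A3_swap v W2 W1]
  exact A3_mul_A4 v k _ W2 W1 (by rwa [add_comm]) (by rwa [add_comm]) (by rwa [add_comm])
    (by rwa [add_comm])

/-- For a balanced weighing matrix `W = W₁ − W₂` with parameters `(v,k,λ)`,
`λ = k(k−1)/(v−1)`, `v > k`, the matrices `A₁, A₂, A₃, A₄` satisfy
`A₃ A₄ = A₄ A₃ = k A₁ + (k(k−1)/(2(v−1))) A₂` and `A₁ A₃ = A₄`. -/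
theorem scheme_product_relations (v : ℕ) (hv : 1 < v) (k : ℚ) (hvk : k < v)
    (W1 W2 : Matrix (Fin v) (Fin v) ℚ)
    (h01a : ∀ x y, W1 x y = 0 ∨ W1 x y = 1)
    (h01b : ∀ x y, W2 x y = 0 ∨ W2 x y = 1)
    (hdisj : ∀ x y, W1 x y = 1 → W2 x y ≠ 1)
    (hW : (W1 - W2) * (W1 - W2)ᵀ = k • (1 : Matrix (Fin v) (Fin v) ℚ))
    (hW' : (W1 - W2)ᵀ * (W1 - W2) = k • (1 : Matrix (Fin v) (Fin v) ℚ))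
    (hN : (W1 + W2) * (W1 + W2)ᵀ
      = (k - k * (k - 1) / ((v : ℚ) - 1)) • (1 : Matrix (Fin v) (Fin v) ℚ)
        + (k * (k - 1) / ((v : ℚ) - 1)) • Jv v)
    (hN' : (W1 + W2)ᵀ * (W1 + W2)
      = (k - k * (k - 1) / ((v : ℚ) - 1)) • (1 : Matrix (Fin v) (Fin v) ℚ)
        + (k * (k - 1) / ((v : ℚ) - 1)) • Jv v) :
    A3 v W1 W2 * A4 v W1 W2
      = k • A1 v + (k * (k - 1) / (2 * ((v : ℚ) - 1))) • A2 v ∧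
    A4 v W1 W2 * A3 v W1 W2
      = k • A1 v + (k * (k - 1) / (2 * ((v : ℚ) - 1))) • A2 v ∧
    A1 v * A3 v W1 W2 = A4 v W1 W2 :=
  scheme_product_relations_general v k W1 W2 hW hW' hN hN'

end BGWScheme
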